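/- arXiv:1606.02379 — 2 statements merged into one kernel-verified Lean document; each statement's English description precedes it below -/
import Mathlib

section
/- Let K ≥ 2, σ² > 0, 0 < C_1 ≤ … ≤ C_K, D_k ∈ (0,1), P > 0, P_c > 0, and let a*_k(θ), x*_k(θ) and N(θ) := log₂(C_1·θ + σ²) + Σ_{k=1}^{K−1}[log₂(C_{k+1}·x*_k(θ) + σ²) − log₂(C_k·x*_k(θ) + σ²)] be as in Theorem 2, with a*_k(θ) = D_k·(θ − Σ_{i<k} a*_i(θ)) + D_k σ²/C_k for k < K, a*_K(θ) = θ − Σ_{i<K} a*_i(θ), x*_k(θ) = Σ_{i>k} a*_i(θ). Let I ⊆ (0, ∞) be an interval on which x*_k(θ) ≥ 0 for all k ≤ K−1, and define EE(θ) := N(θ)/(θ·P + P_c). Then EE is strictly pseudo-concave on I: EE is differentiable on the interior of I, and for all θ₁ in the interior of I and θ₂ ∈ I with θ₂ ≠ θ₁, if EE′(θ₁)·(θ₂ − θ₁) ≤ 0 then EE(θ₂) < EE(θ₁). -/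
/-!
Each `a*_k(θ)` is an affine function of the power `θ - ∑_{i<k} a*_i(θ)` left over by the
previous users, so all residual powers `x*_k(θ)` are affine in `θ`. Hence `N` is the strictly
concave `log₂ (C₁ θ + σ²)` plus terms `log₂ ((C_{k+1} x + σ²) / (C_k x + σ²))` at affine
arguments `x ≥ 0`; each is concave because `C_k ≤ C_{k+1}` makes the ratio equal to
`C_{k+1}/C_k - const / (C_k x + σ²)` with a nonnegative constant. A strictly concave numerator
over a positive affine denominator is strictly pseudo-concave: the tangent of the numerator at
`θ₁` lies strictly above it, and the sign condition on `EE′(θ₁)` puts that tangent below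
`EE(θ₁)` times the denominator.
-/

open Real Set

section Convexity

variable {𝕜 E α β ι : Type*}

theorem ConcaveOn.comp_of_mapsTo [Semiring 𝕜] [PartialOrder 𝕜] [AddCommMonoid E]
    [AddCommMonoid α] [PartialOrder α] [AddCommMonoid β] [PartialOrder β]
    [SMul 𝕜 E] [SMul 𝕜 α] [SMul 𝕜 β] {s : Set E} {t : Set α} {f : E → α} {g : α → β}
    (hg : ConcaveOn 𝕜 t g) (hf : ConcaveOn 𝕜 s f) (hg' : MonotoneOn g t) (hst : MapsTo f s t) :
    ConcaveOn 𝕜 s (g ∘ f) :=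
  ⟨hf.1, fun _ hx _ hy _ _ ha hb hab =>
    (hg.2 (hst hx) (hst hy) ha hb hab).trans <|
      hg' (hg.1 (hst hx) (hst hy) ha hb hab) (hst <| hf.1 hx hy ha hb hab) (hf.2 hx hy ha hb hab)⟩

theorem ConcaveOn.sum [Semiring 𝕜] [PartialOrder 𝕜] [AddCommMonoid E] [AddCommMonoid β]
    [PartialOrder β] [IsOrderedAddMonoid β] [SMul 𝕜 E] [Module 𝕜 β] {s : Set E} {t : Finset ι}
    {f : ι → E → β} (hs : Convex 𝕜 s) (h : ∀ i ∈ t, ConcaveOn 𝕜 s (f i)) :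
    ConcaveOn 𝕜 s (fun x => ∑ i ∈ t, f i x) := by
  simpa only [← Finset.sum_apply] using
    Finset.sum_induction f (ConcaveOn 𝕜 s) (fun _ _ => ConcaveOn.add) (concaveOn_const 0 hs) h

section Affine

variable [AddCommMonoid β] [PartialOrder β] [SMul ℝ β] {s t : Set ℝ} {f : ℝ → β} {a b : ℝ}

theorem combo_mul_add_const (a b x y p q : ℝ) (hpq : p + q = 1) :
    p • (a * x + b) + q • (a * y + b) = a * (p • x + q • y) + b := by
  simp only [smul_eq_mul]
  linear_combination b * hpq

theorem ConvexOn.comp_affine (hf : ConvexOn ℝ t f) (hs : Convex ℝ s)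
    (hst : MapsTo (fun x => a * x + b) s t) : ConvexOn ℝ s (fun x => f (a * x + b)) :=
  ⟨hs, fun x hx y hy p q hp hq hpq => by
    simpa only [combo_mul_add_const a b x y p q hpq] using hf.2 (hst hx) (hst hy) hp hq hpq⟩

theorem ConcaveOn.comp_affine (hf : ConcaveOn ℝ t f) (hs : Convex ℝ s)
    (hst : MapsTo (fun x => a * x + b) s t) : ConcaveOn ℝ s (fun x => f (a * x + b)) :=
  ConvexOn.comp_affine (β := βᵒᵈ) hf hs hst

theorem StrictConcaveOn.comp_affine (hf : StrictConcaveOn ℝ t f) (ha : a ≠ 0) (hs : Convex ℝ s)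
    (hst : MapsTo (fun x => a * x + b) s t) : StrictConcaveOn ℝ s (fun x => f (a * x + b)) :=
  ⟨hs, fun x hx y hy hxy p q hp hq hpq => by
    have hne : a * x + b ≠ a * y + b := fun h => hxy (mul_left_cancel₀ ha (add_right_cancel h))
    simpa only [combo_mul_add_const a b x y p q hpq] using hf.2 (hst hx) (hst hy) hne hp hq hpq⟩

end Affine

end Convexity

section Logb

variable {b : ℝ}

theorem strictConcaveOn_logb_Ioi (hb : 1 < b) : StrictConcaveOn ℝ (Ioi 0) (logb b) :=
  ⟨convex_Ioi 0, fun x hx y hy hxy p q hp hq hpq => by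
    have h := div_lt_div_of_pos_right (strictConcaveOn_log_Ioi.2 hx hy hxy hp hq hpq) (log_pos hb)
    simpa only [smul_eq_mul, logb, add_div, mul_div_assoc] using h⟩

theorem convexOn_inv_mul_add {c s : ℝ} (hc : 0 ≤ c) (hs : 0 < s) :
    ConvexOn ℝ (Ici 0) (fun x => (c * x + s)⁻¹) := by
  simpa only [zpow_neg_one] using (convexOn_zpow (𝕜 := ℝ) (-1)).comp_affine (convex_Ici 0)
    fun x (hx : 0 ≤ x) => show 0 < c * x + s by positivity

theorem concaveOn_logb_sub_logb {c c' s : ℝ} (hb : 1 < b) (hc : 0 < c) (hcc : c ≤ c')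
    (hs : 0 < s) : ConcaveOn ℝ (Ici 0) (fun x => logb b (c' * x + s) - logb b (c * x + s)) := by
  have hc' : 0 < c' := hc.trans_le hcc
  have hB : 0 ≤ s * (c' - c) / c := div_nonneg (mul_nonneg hs.le (sub_nonneg.2 hcc)) hc.le
  have hratio : ConcaveOn ℝ (Ici 0) (fun x => c' / c - s * (c' - c) / c * (c * x + s)⁻¹) :=
    (concaveOn_const _ (convex_Ici 0)).sub ((convexOn_inv_mul_add hc.le hs).smul hB)
  have hratio_eq : ∀ x ∈ Ici (0 : ℝ),
      c' / c - s * (c' - c) / c * (c * x + s)⁻¹ = (c' * x + s) / (c * x + s) := by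
    intro x (hx : 0 ≤ x)
    field_simp
    ring
  have hmaps : MapsTo (fun x => c' / c - s * (c' - c) / c * (c * x + s)⁻¹) (Ici 0) (Ioi 0) := by
    intro x (hx : 0 ≤ x)
    simp only [mem_Ioi, hratio_eq x hx]
    positivity
  refine ((strictConcaveOn_logb_Ioi hb).concaveOn.comp_of_mapsTo hratio
    (fun x hx y _ hxy => logb_le_logb_of_le hb hx hxy) hmaps).congr fun x (hx : 0 ≤ x) => ?_
  rw [Function.comp_apply, hratio_eq x hx, logb_div (by positivity) (by positivity)]

end Logb

section PseudoConcave

variable {f : ℝ → ℝ} {s : Set ℝ}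

def StrictPseudoConcaveOn (s : Set ℝ) (f : ℝ → ℝ) : Prop :=
  (∀ x ∈ interior s, DifferentiableAt ℝ f x) ∧
    ∀ x ∈ interior s, ∀ y ∈ s, y ≠ x → deriv f x * (y - x) ≤ 0 → f y < f x

theorem StrictConcaveOn.lt_add_deriv_mul_sub (hf : StrictConcaveOn ℝ s f) {x y : ℝ} (hx : x ∈ s)
    (hy : y ∈ s) (hyx : y ≠ x) (hd : DifferentiableAt ℝ f x) :
    f y < f x + deriv f x * (y - x) := by
  rcases hyx.lt_or_gt with hlt | hgt
  · have h := hf.deriv_lt_slope hy hx hlt hd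
    rw [slope_def_field, lt_div_iff₀ (sub_pos.2 hlt)] at h
    linarith
  · have h := hf.slope_lt_deriv hx hy hgt hd
    rw [slope_def_field, div_lt_iff₀ (sub_pos.2 hgt)] at h
    linarith

theorem StrictConcaveOn.strictPseudoConcaveOn_div {p q : ℝ} (hf : StrictConcaveOn ℝ s f)
    (hd : ∀ x ∈ interior s, DifferentiableAt ℝ f x) (hpos : ∀ x ∈ s, 0 < x * p + q) :
    StrictPseudoConcaveOn s (fun x => f x / (x * p + q)) := by
  have hg : ∀ x, HasDerivAt (fun x => x * p + q) p x := fun x => by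
    simpa using ((hasDerivAt_id x).mul_const p).add_const q
  refine ⟨fun x hx => (hd x hx).div (hg x).differentiableAt (hpos x (interior_subset hx)).ne',
    fun x hx y hy hyx hsign => ?_⟩
  have hxs := interior_subset hx
  have hgx := hpos x hxs
  have hgy := hpos y hy
  rw [((hd x hx).hasDerivAt.fun_div (hg x) hgx.ne').deriv, div_mul_eq_mul_div,
    div_le_iff₀ (pow_pos hgx 2), zero_mul] at hsign
  have htangent := hf.lt_add_deriv_mul_sub hxs hy hyx (hd x hx)
  show f y / (y * p + q) < f x / (x * p + q)
  rw [div_lt_div_iff₀ hgy hgx]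
  calc f y * (x * p + q) < (f x + deriv f x * (y - x)) * (x * p + q) :=
        mul_lt_mul_of_pos_right htangent hgx
    _ ≤ f x * (y * p + q) := by linarith

end PseudoConcave

section Allocation

variable {a : ℝ → ℕ → ℝ} {D e : ℕ → ℝ}

theorem exists_affine_sub_sum_Ico {m : ℕ}
    (ha : ∀ θ, ∀ k ∈ Finset.Icc 1 m, a θ k = D k * (θ - ∑ i ∈ Finset.Ico 1 k, a θ i) + e k) :
    ∀ k ≤ m + 1, ∃ α β : ℝ, ∀ θ, θ - ∑ i ∈ Finset.Ico 1 k, a θ i = α * θ + β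
  | 0, _ => ⟨1, 0, fun θ => by simp⟩
  | k + 1, hk => by
    rcases Nat.eq_zero_or_pos k with rfl | hk0
    · exact ⟨1, 0, fun θ => by simp⟩
    obtain ⟨α, β, h⟩ := exists_affine_sub_sum_Ico ha k (by omega)
    refine ⟨(1 - D k) * α, (1 - D k) * β - e k, fun θ => ?_⟩
    rw [Finset.sum_Ico_succ_top hk0, ha θ k (Finset.mem_Icc.2 ⟨hk0, by omega⟩)]
    linear_combination (1 - D k) * h θ

theorem exists_affine_sum_Ioc {K : ℕ}
    (ha : ∀ θ, ∀ k ∈ Finset.Icc 1 (K - 1),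
      a θ k = D k * (θ - ∑ i ∈ Finset.Ico 1 k, a θ i) + e k)
    (haK : ∀ θ, a θ K = θ - ∑ i ∈ Finset.Ico 1 K, a θ i) (k : ℕ) :
    ∃ α β : ℝ, ∀ θ, ∑ i ∈ Finset.Ioc k K, a θ i = α * θ + β := by
  rcases le_or_gt K k with hKk | hkK
  · exact ⟨0, 0, fun θ => by simp [Finset.Ioc_eq_empty_of_le hKk]⟩
  obtain ⟨α, β, h⟩ := exists_affine_sub_sum_Ico ha (k + 1) (by omega)
  refine ⟨α, β, fun θ => ?_⟩
  have htotal : ∑ i ∈ Finset.Ico 1 (k + 1), a θ i + ∑ i ∈ Finset.Ioc k K, a θ i = θ := by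
    rw [← Finset.Ico_add_one_add_one_eq_Ioc, Finset.sum_Ico_consecutive _ (by omega) (by omega),
      Finset.sum_Ico_succ_top (by omega), haK]
    ring
  linarith [h θ]

end Allocation

theorem stmt_15_general (K : ℕ) (hK : 2 ≤ K) (σ2 : ℝ) (hσ : 0 < σ2)
    (C : ℕ → ℝ)
    (hCpos : ∀ k ∈ Finset.Icc 1 K, 0 < C k)
    (hCmono : ∀ k ∈ Finset.Icc 1 (K - 1), C k ≤ C (k + 1))
    (D : ℕ → ℝ)
    (P Pc : ℝ) (hP : 0 < P) (hPc : 0 < Pc)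
    (astar : ℝ → ℕ → ℝ)
    (hastar : ∀ θ : ℝ, ∀ k ∈ Finset.Icc 1 (K - 1),
      astar θ k = D k * (θ - ∑ i ∈ Finset.Ico 1 k, astar θ i) + D k * σ2 / C k)
    (hastarK : ∀ θ : ℝ, astar θ K = θ - ∑ i ∈ Finset.Ico 1 K, astar θ i)
    (xstar : ℝ → ℕ → ℝ)
    (hxstar : ∀ θ k, xstar θ k = ∑ i ∈ Finset.Ioc k K, astar θ i)
    (N : ℝ → ℝ)
    (hN : ∀ θ : ℝ, N θ = Real.logb 2 (C 1 * θ + σ2) +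
      ∑ k ∈ Finset.Icc 1 (K - 1),
        (Real.logb 2 (C (k + 1) * xstar θ k + σ2) -
          Real.logb 2 (C k * xstar θ k + σ2)))
    (I : Set ℝ) (hIconv : Convex ℝ I) (hIsub : I ⊆ Set.Ioi (0 : ℝ))
    (hIx : ∀ θ ∈ I, ∀ k ∈ Finset.Icc 1 (K - 1), 0 ≤ xstar θ k)
    (EE : ℝ → ℝ) (hEE : ∀ θ : ℝ, EE θ = N θ / (θ * P + Pc)) :
    (∀ θ ∈ interior I, DifferentiableAt ℝ EE θ) ∧
    (∀ θ₁ ∈ interior I, ∀ θ₂ ∈ I, θ₂ ≠ θ₁ →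
      deriv EE θ₁ * (θ₂ - θ₁) ≤ 0 → EE θ₂ < EE θ₁) := by
  obtain rfl : EE = fun θ => N θ / (θ * P + Pc) := funext hEE
  choose α β hαβ using exists_affine_sum_Ioc hastar hastarK
  obtain rfl : xstar = fun θ k => α k * θ + β k :=
    funext₂ fun θ k => (hxstar θ k).trans (hαβ k θ)
  have hC1 : 0 < C 1 := hCpos 1 (Finset.mem_Icc.2 ⟨le_rfl, by omega⟩)
  have hC : ∀ k ∈ Finset.Icc 1 (K - 1), 0 < C k ∧ 0 < C (k + 1) := fun k hk => by
    have hk' := Finset.mem_Icc.1 hk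
    exact ⟨hCpos k (Finset.mem_Icc.2 ⟨hk'.1, by omega⟩),
      hCpos (k + 1) (Finset.mem_Icc.2 ⟨by omega, by omega⟩)⟩
  have hconc : StrictConcaveOn ℝ I N :=
    ((strictConcaveOn_logb_Ioi one_lt_two).comp_affine hC1.ne' hIconv
      (fun θ hθ => show 0 < C 1 * θ + σ2 by have : 0 < θ := hIsub hθ; positivity)).add_concaveOn
      (ConcaveOn.sum hIconv fun k hk =>
        (concaveOn_logb_sub_logb one_lt_two (hC k hk).1 (hCmono k hk) hσ).comp_affine hIconv
          fun θ hθ => hIx θ hθ k hk) |>.congr fun θ _ => (hN θ).symm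
  have hdiff : ∀ θ ∈ I, DifferentiableAt ℝ N θ := fun θ hθ => by
    have hθ0 : 0 < θ := hIsub hθ
    rw [show N = _ from funext hN]
    simp only [logb]
    refine DifferentiableAt.add (by fun_prop (disch := positivity))
      (DifferentiableAt.fun_sum fun k hk => ?_)
    have := hIx θ hθ k hk
    obtain ⟨hCk, hCk1⟩ := hC k hk
    fun_prop (disch := positivity)
  exact hconc.strictPseudoConcaveOn_div (fun θ hθ => hdiff θ (interior_subset hθ))
    fun θ hθ => by have : 0 < θ := hIsub hθ; positivity

/-- Theorem 3 of the paper: the energy efficiency `EE(θ) = N(θ)/(θ P + P_c)`, where `N(θ)`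
is the optimized NOMA sum rate obtained from the allocation `a*(θ)` of Theorem 2, is
strictly pseudo-concave on any interval `I ⊆ (0, ∞)` on which all `x*_k(θ) ≥ 0`:
`EE` is differentiable on the interior of `I`, and whenever `EE′(θ₁)·(θ₂ − θ₁) ≤ 0` for
`θ₁` interior, `θ₂ ∈ I`, `θ₂ ≠ θ₁`, one has `EE(θ₂) < EE(θ₁)`. -/
theorem stmt_15 (K : ℕ) (hK : 2 ≤ K) (σ2 : ℝ) (hσ : 0 < σ2)
    (C : ℕ → ℝ)
    (hCpos : ∀ k ∈ Finset.Icc 1 K, 0 < C k)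
    (hCmono : ∀ k ∈ Finset.Icc 1 (K - 1), C k ≤ C (k + 1))
    (D : ℕ → ℝ) (hD : ∀ k ∈ Finset.Icc 1 K, D k ∈ Set.Ioo (0 : ℝ) 1)
    (P Pc : ℝ) (hP : 0 < P) (hPc : 0 < Pc)
    (astar : ℝ → ℕ → ℝ)
    (hastar : ∀ θ : ℝ, ∀ k ∈ Finset.Icc 1 (K - 1),
      astar θ k = D k * (θ - ∑ i ∈ Finset.Ico 1 k, astar θ i) + D k * σ2 / C k)
    (hastarK : ∀ θ : ℝ, astar θ K = θ - ∑ i ∈ Finset.Ico 1 K, astar θ i)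
    (xstar : ℝ → ℕ → ℝ)
    (hxstar : ∀ θ k, xstar θ k = ∑ i ∈ Finset.Ioc k K, astar θ i)
    (N : ℝ → ℝ)
    (hN : ∀ θ : ℝ, N θ = Real.logb 2 (C 1 * θ + σ2) +
      ∑ k ∈ Finset.Icc 1 (K - 1),
        (Real.logb 2 (C (k + 1) * xstar θ k + σ2) -
          Real.logb 2 (C k * xstar θ k + σ2)))
    (I : Set ℝ) (hIconv : Convex ℝ I) (hIsub : I ⊆ Set.Ioi (0 : ℝ))
    (hIx : ∀ θ ∈ I, ∀ k ∈ Finset.Icc 1 (K - 1), 0 ≤ xstar θ k)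
    (EE : ℝ → ℝ) (hEE : ∀ θ : ℝ, EE θ = N θ / (θ * P + Pc)) :
    (∀ θ ∈ interior I, DifferentiableAt ℝ EE θ) ∧
    (∀ θ₁ ∈ interior I, ∀ θ₂ ∈ I, θ₂ ≠ θ₁ →
      deriv EE θ₁ * (θ₂ - θ₁) ≤ 0 → EE θ₂ < EE θ₁) :=
  stmt_15_general K hK σ2 hσ C hCpos hCmono D P Pc hP hPc astar hastar hastarK xstar hxstar N hN I
    hIconv hIsub hIx EE hEE
end

section
/- Under the hypotheses of Theorem 3 (K ≥ 2, σ² > 0, 0 < C_1 ≤ … ≤ C_K, D_k ∈ (0,1), P > 0, P_c > 0, a*_k(θ) and N(θ) defined by the recursion of Theorem 2, and EE(θ) = N(θ)/(θ·P + P_c)), let [θ_min, 1] with 0 < θ_min ≤ 1 be a compact interval on which x*_k(θ) ≥ 0 for all k ≤ K−1. Then EE attains its maximum over [θ_min, 1] at a unique point θ* ∈ [θ_min, 1]; that is, there exists a unique θ* with EE(θ) < EE(θ*) for all θ ∈ [θ_min, 1] with θ ≠ θ*. -/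
/-!
Each tail power `x*_k(θ)` is affine in `θ`, because the recursion of Theorem 2 is linear. Hence
`N(θ)` is the strictly concave `log (C₁ θ + σ²)` plus terms
`log (C_{k+1} x + σ²) - log (C_k x + σ²)`, concave in `x ≥ 0` (as `C_k ≤ C_{k+1}`), composed with
affine maps, so `N` is strictly concave. A strictly concave function over a positive affine one
is strictly quasiconcave: if `f/g` took the value `m` at two points, then `f > m g` at their
midpoint. On the compact interval `[θ_min, 1]` the continuous `EE` attains its maximum, and by
strict quasiconcavity nowhere else.
-/

open Real Set

theorem concaveOn_finset_sum {ι E : Type*} [AddCommGroup E] [Module ℝ E] {s : Set E}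
    (hs : Convex ℝ s) (t : Finset ι) {f : ι → E → ℝ} (hf : ∀ i ∈ t, ConcaveOn ℝ s (f i)) :
    ConcaveOn ℝ s (fun x => ∑ i ∈ t, f i x) := by
  classical
  induction t using Finset.induction with
  | empty => simpa using concaveOn_const 0 hs
  | insert i t hi ih =>
    simp only [Finset.sum_insert hi]
    exact (hf i (t.mem_insert_self i)).add (ih fun j hj => hf j (Finset.mem_insert_of_mem hj))

theorem StrictConcaveOn.comp_affineMap {E F : Type*} [AddCommGroup E] [Module ℝ E]
    [AddCommGroup F] [Module ℝ F] {t : Set F} {f : F → ℝ} (hf : StrictConcaveOn ℝ t f)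
    (g : E →ᵃ[ℝ] F) (hg : Function.Injective g) : StrictConcaveOn ℝ (g ⁻¹' t) (f ∘ g) :=
  ⟨hf.1.affine_preimage g, fun _ hx _ hy hxy _ _ ha hb hab => by
    simpa only [Function.comp_apply, Convex.combo_affine_apply hab]
      using hf.2 hx hy (hg.ne hxy) ha hb hab⟩

theorem continuousOn_log_mul_add_sub_log_mul_add {a b s : ℝ} (ha : 0 ≤ a) (hb : 0 ≤ b)
    (hs : 0 < s) :
    ContinuousOn (fun x => log (a * x + s) - log (b * x + s)) (Ici 0) := by
  refine ContinuousOn.sub ?_ ?_ <;> refine ContinuousOn.log (by fun_prop) fun x hx => ?_ <;>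
    have : (0 : ℝ) ≤ x := hx <;> positivity

theorem concaveOn_log_mul_add_sub_log_mul_add {a b s : ℝ} (hb : 0 ≤ b) (hba : b ≤ a)
    (hs : 0 < s) :
    ConcaveOn ℝ (Ici 0) (fun x => log (a * x + s) - log (b * x + s)) := by
  have ha : 0 ≤ a := hb.trans hba
  refine concaveOn_of_hasDerivWithinAt2_nonpos (convex_Ici 0)
    (continuousOn_log_mul_add_sub_log_mul_add ha hb hs)
    (f' := fun x => a / (a * x + s) - b / (b * x + s))
    (f'' := fun x => (b / (b * x + s)) ^ 2 - (a / (a * x + s)) ^ 2) ?_ ?_ ?_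
  all_goals
    intro x hx
    rw [interior_Ici] at hx
    have hx : 0 < x := hx
    have hax : 0 < a * x + s := by positivity
    have hbx : 0 < b * x + s := by positivity
    have hda : HasDerivAt (fun y => a * y + s) a x := by
      simpa using ((hasDerivAt_id x).const_mul a).add_const s
    have hdb : HasDerivAt (fun y => b * y + s) b x := by
      simpa using ((hasDerivAt_id x).const_mul b).add_const s
  · exact ((hda.log hax.ne').sub (hdb.log hbx.ne')).hasDerivWithinAt
  · refine (((hasDerivAt_const x a).div hda hax.ne').sub
      ((hasDerivAt_const x b).div hdb hbx.ne')).hasDerivWithinAt.congr_deriv ?_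
    rw [div_pow, div_pow]
    ring
  · rw [sub_nonpos]
    refine pow_le_pow_left₀ (by positivity) ?_ 2
    rw [div_le_div_iff₀ hbx hax]
    nlinarith [mul_le_mul_of_nonneg_right hba hs.le]

def StrictQuasiconcaveOn {E : Type*} [AddCommGroup E] [Module ℝ E] (s : Set E) (f : E → ℝ) :
    Prop :=
  Convex ℝ s ∧ ∀ ⦃x⦄, x ∈ s → ∀ ⦃y⦄, y ∈ s → x ≠ y → ∀ ⦃a b : ℝ⦄, 0 < a → 0 < b → a + b = 1 →
    min (f x) (f y) < f (a • x + b • y)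

theorem StrictConcaveOn.strictQuasiconcaveOn_div_affineMap {E : Type*} [AddCommGroup E]
    [Module ℝ E] {s : Set E} {f : E → ℝ} (hf : StrictConcaveOn ℝ s f) (g : E →ᵃ[ℝ] ℝ)
    (hg : ∀ x ∈ s, 0 < g x) : StrictQuasiconcaveOn s (fun x => f x / g x) := by
  refine ⟨hf.1, fun x hx y hy hxy a b ha hb hab => ?_⟩
  set m := min (f x / g x) (f y / g y)
  have hmx : m * g x ≤ f x := (le_div_iff₀ (hg x hx)).1 (min_le_left _ _)
  have hmy : m * g y ≤ f y := (le_div_iff₀ (hg y hy)).1 (min_le_right _ _)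
  rw [lt_div_iff₀ (hg _ (hf.1 hx hy ha.le hb.le hab))]
  calc m * g (a • x + b • y) = a * (m * g x) + b * (m * g y) := by
        rw [Convex.combo_affine_apply hab, smul_eq_mul, smul_eq_mul]; ring
    _ ≤ a * f x + b * f y := by gcongr
    _ < f (a • x + b • y) := hf.2 hx hy hxy ha hb hab

theorem StrictQuasiconcaveOn.existsUnique_forall_lt {E : Type*} [AddCommGroup E] [Module ℝ E]
    [TopologicalSpace E] {s : Set E} {f : E → ℝ} (hf : StrictQuasiconcaveOn s f)
    (hs : IsCompact s) (hne : s.Nonempty) (hcont : ContinuousOn f s) :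
    ∃! x, x ∈ s ∧ ∀ y ∈ s, y ≠ x → f y < f x := by
  obtain ⟨x, hx, hmax⟩ := hs.exists_isMaxOn hne hcont
  refine ⟨x, ⟨hx, fun y hy hyx => (hmax hy).lt_of_ne fun hfy => ?_⟩, ?_⟩
  · have hmid := hf.2 hy hx hyx (by norm_num : (0 : ℝ) < 1 / 2) (by norm_num : (0 : ℝ) < 1 / 2)
      (by norm_num)
    rw [hfy, min_self] at hmid
    exact (hmid.trans_le (hmax (hf.1 hy hx (by norm_num) (by norm_num) (by norm_num)))).false
  · rintro x' ⟨hx', hlt⟩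
    by_contra hne
    exact (hlt x hx (Ne.symm hne)).not_ge (hmax hx')

theorem exists_affineMap_sum_Ico_eq {D c : ℕ → ℝ} {u : ℝ → ℕ → ℝ} {n : ℕ}
    (hu : ∀ θ, ∀ k ∈ Finset.Icc 1 n, u θ k = D k * (θ - ∑ i ∈ Finset.Ico 1 k, u θ i) + c k) :
    ∃ φ : ℝ →ᵃ[ℝ] ℝ, ∀ θ, ∑ i ∈ Finset.Ico 1 (n + 1), u θ i = φ θ := by
  induction n with
  | zero => exact ⟨0, fun θ => by simp⟩
  | succ n ih =>
    obtain ⟨φ, hφ⟩ := ih fun θ k hk => hu θ k (Finset.Icc_subset_Icc_right n.le_succ hk)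
    refine ⟨(1 - D (n + 1)) • φ + D (n + 1) • AffineMap.id ℝ ℝ + AffineMap.const ℝ ℝ (c (n + 1)),
      fun θ => ?_⟩
    rw [Finset.sum_Ico_succ_top (by omega), hu θ (n + 1) (by simp), hφ]
    simp only [AffineMap.coe_add, AffineMap.coe_smul, AffineMap.coe_id, AffineMap.coe_const,
      Pi.add_apply, Pi.smul_apply, id, Function.const_apply, smul_eq_mul]
    ring

theorem exists_affineMap_sum_Ioc_eq {D c : ℕ → ℝ} {u : ℝ → ℕ → ℝ} {K k : ℕ} (hk : k < K)
    (hu : ∀ θ, ∀ j ∈ Finset.Icc 1 k, u θ j = D j * (θ - ∑ i ∈ Finset.Ico 1 j, u θ i) + c j)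
    (hK : ∀ θ, u θ K = θ - ∑ i ∈ Finset.Ico 1 K, u θ i) :
    ∃ φ : ℝ →ᵃ[ℝ] ℝ, ∀ θ, ∑ i ∈ Finset.Ioc k K, u θ i = φ θ := by
  obtain ⟨φ, hφ⟩ := exists_affineMap_sum_Ico_eq hu
  refine ⟨AffineMap.id ℝ ℝ - φ, fun θ => ?_⟩
  have htotal : ∑ i ∈ Finset.Ico 1 (K + 1), u θ i = θ := by
    rw [Finset.sum_Ico_succ_top (by omega), hK θ]; ring
  have hsplit :=
    Finset.sum_Ico_consecutive (u θ) (Nat.le_add_left 1 k) (Nat.add_le_add_right hk.le 1)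
  rw [hφ, htotal, Finset.Ico_add_one_add_one_eq_Ioc] at hsplit
  simp only [AffineMap.coe_sub, AffineMap.coe_id, Pi.sub_apply, id]
  linarith

/-- The sum rate `N(θ)` of Theorem 2 in nats, `N = sumRateNats / log 2`, with `x θ k = x*_k(θ)`. -/
noncomputable def sumRateNats (K : ℕ) (σ2 : ℝ) (C : ℕ → ℝ) (x : ℝ → ℕ → ℝ) (θ : ℝ) : ℝ :=
  log (C 1 * θ + σ2) +
    ∑ k ∈ Finset.Icc 1 (K - 1), (log (C (k + 1) * x θ k + σ2) - log (C k * x θ k + σ2))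

section SumRate

variable {K : ℕ} {σ2 : ℝ} {C : ℕ → ℝ} {x : ℝ → ℕ → ℝ} {s : Set ℝ}

theorem strictConcaveOn_sumRateNats (hK : 1 ≤ K) (hσ : 0 < σ2)
    (hCpos : ∀ k ∈ Finset.Icc 1 K, 0 < C k)
    (hCmono : ∀ k ∈ Finset.Icc 1 (K - 1), C k ≤ C (k + 1))
    (hxaff : ∀ k ∈ Finset.Icc 1 (K - 1), ∃ φ : ℝ →ᵃ[ℝ] ℝ, ∀ θ, x θ k = φ θ)
    (hs : Convex ℝ s) (hs0 : s ⊆ Ici 0) (hx : ∀ θ ∈ s, ∀ k ∈ Finset.Icc 1 (K - 1), 0 ≤ x θ k) :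
    StrictConcaveOn ℝ s (sumRateNats K σ2 C x) := by
  have hC1 : 0 < C 1 := hCpos 1 (by simp [hK])
  have hfirst : StrictConcaveOn ℝ s fun θ => log (C 1 * θ + σ2) := by
    have hinj : Function.Injective (C 1 • AffineMap.id ℝ ℝ + AffineMap.const ℝ ℝ σ2) :=
      fun θ θ' h => by simpa [hC1.ne'] using h
    refine ((strictConcaveOn_log_Ioi.comp_affineMap _ hinj).subset (fun θ hθ => ?_) hs).congr
      fun θ _ => by simp
    have : (0 : ℝ) ≤ θ := hs0 hθ
    simpa using (by positivity : 0 < C 1 * θ + σ2)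
  have hterm : ∀ k ∈ Finset.Icc 1 (K - 1), ConcaveOn ℝ s fun θ =>
      log (C (k + 1) * x θ k + σ2) - log (C k * x θ k + σ2) := fun k hk => by
    obtain ⟨φ, hφ⟩ := hxaff k hk
    have hCk : 0 < C k := hCpos k (Finset.mem_Icc.2 ⟨(Finset.mem_Icc.1 hk).1, by simp at hk; omega⟩)
    refine (((concaveOn_log_mul_add_sub_log_mul_add hCk.le (hCmono k hk) hσ).comp_affineMap
      φ).subset (fun θ hθ => ?_) hs).congr fun θ _ => by simp [hφ]
    simpa [hφ] using hx θ hθ k hk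
  exact hfirst.add_concaveOn (concaveOn_finset_sum hs _ hterm)

theorem continuousOn_sumRateNats (hK : 1 ≤ K) (hσ : 0 < σ2)
    (hCpos : ∀ k ∈ Finset.Icc 1 K, 0 < C k)
    (hxaff : ∀ k ∈ Finset.Icc 1 (K - 1), ∃ φ : ℝ →ᵃ[ℝ] ℝ, ∀ θ, x θ k = φ θ)
    (hs0 : s ⊆ Ici 0) (hx : ∀ θ ∈ s, ∀ k ∈ Finset.Icc 1 (K - 1), 0 ≤ x θ k) :
    ContinuousOn (sumRateNats K σ2 C x) s := by
  refine ContinuousOn.add (ContinuousOn.log (by fun_prop) fun θ hθ => ?_)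
    (continuousOn_finsetSum _ fun k hk => ?_)
  · have : (0 : ℝ) ≤ θ := hs0 hθ
    have := hCpos 1 (by simp [hK])
    positivity
  · obtain ⟨φ, hφ⟩ := hxaff k hk
    have hk' := Finset.mem_Icc.1 hk
    have hCk : 0 < C k := hCpos k (Finset.mem_Icc.2 ⟨hk'.1, by omega⟩)
    have hCk1 : 0 < C (k + 1) := hCpos (k + 1) (Finset.mem_Icc.2 ⟨by omega, by omega⟩)
    simp only [hφ]
    exact (continuousOn_log_mul_add_sub_log_mul_add hCk1.le hCk.le hσ).comp
      φ.continuous_of_finiteDimensional.continuousOn fun θ hθ => by simpa [hφ] using hx θ hθ k hk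

end SumRate

theorem stmt_16_general (K : ℕ) (hK : 2 ≤ K) (σ2 : ℝ) (hσ : 0 < σ2)
    (C : ℕ → ℝ)
    (hCpos : ∀ k ∈ Finset.Icc 1 K, 0 < C k)
    (hCmono : ∀ k ∈ Finset.Icc 1 (K - 1), C k ≤ C (k + 1))
    (D : ℕ → ℝ)
    (P Pc : ℝ) (hP : 0 < P) (hPc : 0 < Pc)
    (astar : ℝ → ℕ → ℝ)
    (hastar : ∀ θ : ℝ, ∀ k ∈ Finset.Icc 1 (K - 1),
      astar θ k = D k * (θ - ∑ i ∈ Finset.Ico 1 k, astar θ i) + D k * σ2 / C k)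
    (hastarK : ∀ θ : ℝ, astar θ K = θ - ∑ i ∈ Finset.Ico 1 K, astar θ i)
    (xstar : ℝ → ℕ → ℝ)
    (hxstar : ∀ θ k, xstar θ k = ∑ i ∈ Finset.Ioc k K, astar θ i)
    (N : ℝ → ℝ)
    (hN : ∀ θ : ℝ, N θ = Real.logb 2 (C 1 * θ + σ2) +
      ∑ k ∈ Finset.Icc 1 (K - 1),
        (Real.logb 2 (C (k + 1) * xstar θ k + σ2) -
          Real.logb 2 (C k * xstar θ k + σ2)))
    (EE : ℝ → ℝ) (hEE : ∀ θ : ℝ, EE θ = N θ / (θ * P + Pc))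
    (θmin : ℝ) (hθmin : 0 < θmin) (hθmin1 : θmin ≤ 1)
    (hx : ∀ θ ∈ Set.Icc θmin 1, ∀ k ∈ Finset.Icc 1 (K - 1), 0 ≤ xstar θ k) :
    ∃! θstar : ℝ, θstar ∈ Set.Icc θmin 1 ∧
      ∀ θ ∈ Set.Icc θmin 1, θ ≠ θstar → EE θ < EE θstar := by
  have hxaff : ∀ k ∈ Finset.Icc 1 (K - 1), ∃ φ : ℝ →ᵃ[ℝ] ℝ, ∀ θ, xstar θ k = φ θ := by
    intro k hk
    simp only [hxstar]
    exact exists_affineMap_sum_Ioc_eq (by simp at hk; omega)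
      (fun θ j hj => hastar θ j (Finset.Icc_subset_Icc_right (Finset.mem_Icc.1 hk).2 hj)) hastarK
  have hs0 : Icc θmin 1 ⊆ Ici 0 := fun θ hθ => hθmin.le.trans hθ.1
  -- The factor `log 2` converting bits to nats is absorbed into the affine denominator.
  let g : ℝ →ᵃ[ℝ] ℝ := (log 2 * P) • AffineMap.id ℝ ℝ + AffineMap.const ℝ ℝ (log 2 * Pc)
  have hg : ∀ θ, g θ = log 2 * (θ * P + Pc) := fun θ => by simp [g]; ring
  have hgpos : ∀ θ ∈ Icc θmin 1, 0 < g θ := fun θ hθ => by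
    have : 0 < θ := hθmin.trans_le hθ.1
    have := log_pos one_lt_two
    rw [hg]; positivity
  have hEEeq : EE = fun θ => sumRateNats K σ2 C xstar θ / g θ := funext fun θ => by
    simp only [hEE, hN, hg, sumRateNats, logb, ← sub_div, ← Finset.sum_div, ← add_div, div_div]
  rw [hEEeq]
  exact ((strictConcaveOn_sumRateNats (by omega) hσ hCpos hCmono hxaff (convex_Icc _ _) hs0 hx
    ).strictQuasiconcaveOn_div_affineMap g hgpos).existsUnique_forall_lt isCompact_Icc
    (nonempty_Icc.2 hθmin1) ((continuousOn_sumRateNats (by omega) hσ hCpos hxaff hs0 hx).div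
      g.continuous_of_finiteDimensional.continuousOn fun θ hθ => (hgpos θ hθ).ne')

/-- Unique maximizer of the energy efficiency over the feasible range `[θ_min, 1]`:
under the hypotheses of Theorem 3, `EE(θ) = N(θ)/(θ P + P_c)` attains its maximum over
`[θ_min, 1]` at a unique point `θ*`, i.e. there is a unique `θ* ∈ [θ_min, 1]` with
`EE(θ) < EE(θ*)` for all other `θ ∈ [θ_min, 1]`. -/
theorem stmt_16 (K : ℕ) (hK : 2 ≤ K) (σ2 : ℝ) (hσ : 0 < σ2)
    (C : ℕ → ℝ)
    (hCpos : ∀ k ∈ Finset.Icc 1 K, 0 < C k)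
    (hCmono : ∀ k ∈ Finset.Icc 1 (K - 1), C k ≤ C (k + 1))
    (D : ℕ → ℝ) (hD : ∀ k ∈ Finset.Icc 1 K, D k ∈ Set.Ioo (0 : ℝ) 1)
    (P Pc : ℝ) (hP : 0 < P) (hPc : 0 < Pc)
    (astar : ℝ → ℕ → ℝ)
    (hastar : ∀ θ : ℝ, ∀ k ∈ Finset.Icc 1 (K - 1),
      astar θ k = D k * (θ - ∑ i ∈ Finset.Ico 1 k, astar θ i) + D k * σ2 / C k)
    (hastarK : ∀ θ : ℝ, astar θ K = θ - ∑ i ∈ Finset.Ico 1 K, astar θ i)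
    (xstar : ℝ → ℕ → ℝ)
    (hxstar : ∀ θ k, xstar θ k = ∑ i ∈ Finset.Ioc k K, astar θ i)
    (N : ℝ → ℝ)
    (hN : ∀ θ : ℝ, N θ = Real.logb 2 (C 1 * θ + σ2) +
      ∑ k ∈ Finset.Icc 1 (K - 1),
        (Real.logb 2 (C (k + 1) * xstar θ k + σ2) -
          Real.logb 2 (C k * xstar θ k + σ2)))
    (EE : ℝ → ℝ) (hEE : ∀ θ : ℝ, EE θ = N θ / (θ * P + Pc))
    (θmin : ℝ) (hθmin : 0 < θmin) (hθmin1 : θmin ≤ 1)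
    (hx : ∀ θ ∈ Set.Icc θmin 1, ∀ k ∈ Finset.Icc 1 (K - 1), 0 ≤ xstar θ k) :
    ∃! θstar : ℝ, θstar ∈ Set.Icc θmin 1 ∧
      ∀ θ ∈ Set.Icc θmin 1, θ ≠ θstar → EE θ < EE θstar :=
  stmt_16_general K hK σ2 hσ C hCpos hCmono D P Pc hP hPc astar hastar hastarK xstar hxstar N hN EE
    hEE θmin hθmin hθmin1 hx
end
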